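/- Let Bfly (the butterfly graph) be the graph on vertices {1,2,3,4,5} with edge set {12, 15, 25, 34, 35, 45} (two triangles sharing the vertex 5). For all real numbers λ₁ < λ₂ < λ₃, there exists a matrix A ∈ S(Bfly) that has the Strong Spectral Property and whose spectrum is the multiset {λ₁, λ₁, λ₂, λ₃, λ₃} (ordered multiplicity list (2,1,2)). -/

import Mathlib

/-!
The matrix consists of two blocks `!![c, d; d, c]` on the outer vertices of the triangles, joined
to the centre by weights `a, a` and `b, b`. The vectors `e₀ - e₁` and `e₂ - e₃` are eigenvectors
for `c - d`, which we make `λ₁` and `λ₃`. On the symmetric vectors the matrix is a `3 × 3`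
arrowhead matrix with diagonal `β₁, β₂, e`; taking `β₁, β₂` the midpoints of `(λ₁, λ₂)` and
`(λ₂, λ₃)` (they interlace the target spectrum) and `e` from the trace, there are real nonzero
`a, b` giving it the eigenvalues `λ₁, λ₂, λ₃`. The five eigenvectors are orthogonal, hence form an
invertible `U` with `A U = U D`, and the multiplicities are read off `D`.

For the SSP, a symmetric `X` vanishing on the diagonal and on the edges lives on the four
non-edges between the triangles. The commutator entries in the row of the centre force these
entries to be `x, -x, -x, x`, and the `(0, 2)` entry then reads `(λ₁ - λ₃) x = 0`.
-/

open Matrix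

/-- The geometric multiplicity of `lam` as an eigenvalue of `A`:
`dim ker (A - lam • I)`. -/
noncomputable def multOf {m : Type*} [Fintype m] [DecidableEq m]
    (A : Matrix m m ℝ) (lam : ℝ) : ℕ :=
  Module.finrank ℝ (LinearMap.ker (A - lam • (1 : Matrix m m ℝ)).mulVecLin)

/-- The Strong Spectral Property. -/
def HasSSP {m : Type*} [Fintype m] [DecidableEq m] (A : Matrix m m ℝ) : Prop :=
  ∀ X : Matrix m m ℝ, X.IsSymm → Matrix.hadamard A X = 0 →
    Matrix.hadamard (1 : Matrix m m ℝ) X = 0 → A * X - X * A = 0 → X = 0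

/-- `A ∈ S(G)`: `A` is symmetric and its off-diagonal nonzero pattern is given by `G`. -/
def InS {m : Type*} [Fintype m] [DecidableEq m]
    (G : SimpleGraph m) (A : Matrix m m ℝ) : Prop :=
  A.IsSymm ∧ ∀ i j, i ≠ j → (A i j ≠ 0 ↔ G.Adj i j)


/-- The butterfly graph on vertices `{0,1,2,3,4}`: two triangles `{0,1,4}` and
`{2,3,4}` sharing the vertex `4`. -/
def butterfly : SimpleGraph (Fin 5) :=
  SimpleGraph.fromRel fun i j =>
    (i.val, j.val) ∈ [(0,1), (0,4), (1,4), (2,3), (2,4), (3,4)]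

section Eigenbasis

variable {n : Type*} [Fintype n] [DecidableEq n]

lemma mul_eq_mul_diagonal_of_mulVec {A U : Matrix n n ℝ} {d : n → ℝ}
    (h : ∀ j, A *ᵥ Uᵀ j = d j • Uᵀ j) : A * U = U * diagonal d := by
  ext i j
  rw [mul_diagonal]
  simpa [mul_apply, mulVec, dotProduct, mul_comm] using congrFun (h j) i

lemma isUnit_det_of_transpose_mul_self_eq_diagonal {U : Matrix n n ℝ} {w : n → ℝ}
    (h : Uᵀ * U = diagonal w) (hw : ∀ i, w i ≠ 0) : IsUnit U.det := by
  have hdet := congrArg det h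
  rw [det_mul, det_transpose, det_diagonal] at hdet
  refine isUnit_iff_ne_zero.mpr fun h0 => ?_
  exact Finset.prod_ne_zero_iff.mpr (fun i _ => hw i) (by rw [← hdet, h0, mul_zero])

lemma isUnit_det_of_mul_eq_mul_diagonal {A U : Matrix n n ℝ} {d : n → ℝ} (hA : A.IsSymm)
    (hAU : A * U = U * diagonal d) (hcol : ∀ j, Uᵀ j ≠ 0)
    (horth : ∀ i j, i ≠ j → d i = d j → Uᵀ i ⬝ᵥ Uᵀ j = 0) : IsUnit U.det := by
  -- The Gram matrix `Uᵀ U` commutes with `diagonal d` (as `Uᵀ A U` is symmetric), so it vanishes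
  -- off the blocks where `d` is constant; with `horth` it is diagonal.
  have hcomm : Uᵀ * U * diagonal d = diagonal d * (Uᵀ * U) := by
    calc Uᵀ * U * diagonal d = Uᵀ * (A * U) := by rw [hAU, Matrix.mul_assoc]
      _ = (A * U)ᵀ * U := by rw [transpose_mul, hA.eq, Matrix.mul_assoc]
      _ = diagonal d * (Uᵀ * U) := by rw [hAU, transpose_mul, diagonal_transpose, Matrix.mul_assoc]
  refine isUnit_det_of_transpose_mul_self_eq_diagonal (w := fun i => Uᵀ i ⬝ᵥ Uᵀ i) ?_
    fun i => dotProduct_self_eq_zero.not.mpr (hcol i)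
  ext i j
  change Uᵀ i ⬝ᵥ Uᵀ j = _
  rcases eq_or_ne i j with rfl | hij
  · rw [diagonal_apply_eq]
  rw [diagonal_apply_ne _ hij]
  by_cases hd : d i = d j
  · exact horth i j hij hd
  · have hG : (Uᵀ * U) i j = Uᵀ i ⬝ᵥ Uᵀ j := rfl
    have hij' := congrFun (congrFun hcomm i) j
    rw [mul_diagonal, diagonal_mul, hG] at hij'
    have hprod : (d j - d i) * Uᵀ i ⬝ᵥ Uᵀ j = 0 := by linear_combination hij'
    exact (mul_eq_zero.mp hprod).resolve_left (sub_ne_zero.mpr (Ne.symm hd))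

lemma multOf_add_rank (A : Matrix n n ℝ) (t : ℝ) :
    multOf A t + (A - t • (1 : Matrix n n ℝ)).rank = Fintype.card n := by
  have h := LinearMap.finrank_range_add_finrank_ker (A - t • (1 : Matrix n n ℝ)).mulVecLin
  rw [Module.finrank_fintype_fun_eq_card] at h
  rw [multOf, Matrix.rank]
  omega

lemma multOf_eq_card_of_mul_eq_mul_diagonal {A U : Matrix n n ℝ} {d : n → ℝ}
    (hU : IsUnit U.det) (hAU : A * U = U * diagonal d) (t : ℝ) :
    multOf A t = Fintype.card {i // d i = t} := by
  classical
  have hconj : A - t • (1 : Matrix n n ℝ) = U * diagonal (fun i => d i - t) * U⁻¹ := by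
    rw [← diagonal_sub, ← smul_one_eq_diagonal, Matrix.mul_sub, Matrix.mul_smul, Matrix.mul_one,
      Matrix.sub_mul, ← hAU, Matrix.mul_assoc, Matrix.smul_mul, Matrix.mul_nonsing_inv U hU,
      Matrix.mul_one]
  have hrank : (A - t • (1 : Matrix n n ℝ)).rank = Fintype.card {i // ¬ d i = t} := by
    rw [hconj, rank_mul_eq_left_of_isUnit_det _ _ (isUnit_nonsing_inv_det U hU),
      rank_mul_eq_right_of_isUnit_det _ _ hU, rank_diagonal]
    simp only [sub_ne_zero]
  have := multOf_add_rank A t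
  have := Fintype.card_subtype_compl (fun i => d i = t)
  have := Fintype.card_subtype_le (fun i => d i = t)
  omega

end Eigenbasis

lemma InS.apply_eq_zero {n : Type*} [Fintype n] [DecidableEq n] {G : SimpleGraph n}
    {A X : Matrix n n ℝ} (hA : InS G A) (hAX : hadamard A X = 0) (hIX : hadamard 1 X = 0)
    {i j : n} (hij : i = j ∨ G.Adj i j) : X i j = 0 := by
  rcases hij with rfl | hadj
  · simpa using congrFun (congrFun hIX i) i
  · have hAij : A i j ≠ 0 := (hA.2 i j hadj.ne).mpr hadj
    simpa [hAij] using congrFun (congrFun hAX i) j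

/-- Each triangle block `!![c, d; d, c]` is parametrised by its eigenvalues `α = c - d`
(eigenvector `e₀ - e₁`) and `β = c + d` (eigenvector `e₀ + e₁`). -/
noncomputable def butterflyMatrix (α₁ β₁ α₂ β₂ e a b : ℝ) : Matrix (Fin 5) (Fin 5) ℝ :=
  !![(α₁ + β₁) / 2, (β₁ - α₁) / 2, 0, 0, a;
     (β₁ - α₁) / 2, (α₁ + β₁) / 2, 0, 0, a;
     0, 0, (α₂ + β₂) / 2, (β₂ - α₂) / 2, b;
     0, 0, (β₂ - α₂) / 2, (α₂ + β₂) / 2, b;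
     a, a, b, b, e]

def arrowEigenvector (β₁ β₂ a b t : ℝ) : Fin 5 → ℝ :=
  ![(t - β₂) * a, (t - β₂) * a, (t - β₁) * b, (t - β₁) * b, (t - β₁) * (t - β₂)]

section ButterflyMatrix

variable {α₁ β₁ α₂ β₂ e a b : ℝ}

lemma butterflyMatrix_isSymm : (butterflyMatrix α₁ β₁ α₂ β₂ e a b).IsSymm := by
  ext i j
  fin_cases i <;> fin_cases j <;> rfl

lemma inS_butterflyMatrix (h₁ : α₁ ≠ β₁) (h₂ : α₂ ≠ β₂) (ha : a ≠ 0) (hb : b ≠ 0) :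
    InS butterfly (butterflyMatrix α₁ β₁ α₂ β₂ e a b) := by
  refine ⟨butterflyMatrix_isSymm, fun i j hij => ?_⟩
  have h₁' : β₁ - α₁ ≠ 0 := sub_ne_zero.mpr h₁.symm
  have h₂' : β₂ - α₂ ≠ 0 := sub_ne_zero.mpr h₂.symm
  fin_cases i <;> fin_cases j <;> simp_all [butterflyMatrix, butterfly, SimpleGraph.fromRel_adj]

lemma butterflyMatrix_mulVec_antisymm₁ :
    butterflyMatrix α₁ β₁ α₂ β₂ e a b *ᵥ ![1, -1, 0, 0, 0] = α₁ • ![1, -1, 0, 0, 0] := by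
  ext i
  fin_cases i <;>
    simp only [butterflyMatrix, mulVec, dotProduct, Fin.sum_univ_five, Pi.smul_apply, smul_eq_mul,
      of_apply, cons_val', cons_val, cons_val_zero, cons_val_one, cons_val_fin_one, Fin.isValue,
      Fin.zero_eta, Fin.mk_one, Fin.reduceFinMk] <;> ring

lemma butterflyMatrix_mulVec_antisymm₂ :
    butterflyMatrix α₁ β₁ α₂ β₂ e a b *ᵥ ![0, 0, 1, -1, 0] = α₂ • ![0, 0, 1, -1, 0] := by
  ext i
  fin_cases i <;>
    simp only [butterflyMatrix, mulVec, dotProduct, Fin.sum_univ_five, Pi.smul_apply, smul_eq_mul,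
      of_apply, cons_val', cons_val, cons_val_zero, cons_val_one, cons_val_fin_one, Fin.isValue,
      Fin.zero_eta, Fin.mk_one, Fin.reduceFinMk] <;> ring

lemma butterflyMatrix_mulVec_arrowEigenvector {t : ℝ}
    (ht : (t - β₁) * (t - β₂) * (t - e) = 2 * a ^ 2 * (t - β₂) + 2 * b ^ 2 * (t - β₁)) :
    butterflyMatrix α₁ β₁ α₂ β₂ e a b *ᵥ arrowEigenvector β₁ β₂ a b t
      = t • arrowEigenvector β₁ β₂ a b t := by
  ext i
  fin_cases i <;>
    simp only [butterflyMatrix, arrowEigenvector, mulVec, dotProduct, Fin.sum_univ_five,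
      Pi.smul_apply, smul_eq_mul, of_apply, cons_val', cons_val, cons_val_zero, cons_val_one,
      cons_val_fin_one, Fin.isValue, Fin.zero_eta, Fin.mk_one, Fin.reduceFinMk]
  all_goals first | ring1 | linear_combination -ht

lemma hasSSP_butterflyMatrix (hS : InS butterfly (butterflyMatrix α₁ β₁ α₂ β₂ e a b))
    (ha : a ≠ 0) (hb : b ≠ 0) (h : α₁ ≠ α₂) : HasSSP (butterflyMatrix α₁ β₁ α₂ β₂ e a b) := by
  intro X hX hAX hIX hC
  have hzero : ∀ i j, (i = j ∨ butterfly.Adj i j) → X i j = 0 :=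
    fun i j => hS.apply_eq_zero hAX hIX
  obtain ⟨x, y, z, w, rfl⟩ : ∃ x y z w : ℝ,
      X = !![0, 0, x, y, 0; 0, 0, z, w, 0; x, z, 0, 0, 0; y, w, 0, 0, 0; 0, 0, 0, 0, 0] := by
    refine ⟨X 0 2, X 0 3, X 1 2, X 1 3, ?_⟩
    ext i j
    fin_cases i <;> fin_cases j <;>
      simp only [of_apply, cons_val', cons_val, cons_val_zero, cons_val_one, cons_val_fin_one,
        Fin.isValue, Fin.zero_eta, Fin.mk_one, Fin.reduceFinMk]
    all_goals first
      | exact hzero _ _ (Or.inl rfl)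
      | exact hzero _ _ (Or.inr (by simp [butterfly]))
      | exact hX.apply _ _
  have h42 := congrFun (congrFun hC 4) 2
  have h43 := congrFun (congrFun hC 4) 3
  have h40 := congrFun (congrFun hC 4) 0
  have h02 := congrFun (congrFun hC 0) 2
  simp only [butterflyMatrix, Matrix.sub_apply, Matrix.zero_apply, mul_apply, Fin.sum_univ_five,
    of_apply, cons_val', cons_val, cons_val_zero, cons_val_one, cons_val_fin_one,
    Fin.isValue] at h42 h43 h40 h02
  have hxz : x + z = 0 := (mul_eq_zero.mp (by linear_combination h42)).resolve_left ha
  have hyw : y + w = 0 := (mul_eq_zero.mp (by linear_combination h43)).resolve_left ha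
  have hxy : x + y = 0 := (mul_eq_zero.mp (by linear_combination h40)).resolve_left hb
  have hx : x = 0 := (mul_eq_zero.mp (by
      linear_combination h02 - (β₁ - α₁) / 2 * hxz + (β₂ - α₂) / 2 * hxy :
      (α₁ - α₂) * x = 0)).resolve_left (sub_ne_zero.mpr h)
  obtain rfl : y = 0 := by linarith
  obtain rfl : z = 0 := by linarith
  obtain rfl : w = 0 := by linarith
  subst hx
  ext i j
  fin_cases i <;> fin_cases j <;> rfl

end ButterflyMatrix

/-- On `span {e₀ + e₁, e₂ + e₃, e₄}` the matrix `butterflyMatrix` acts as an arrowhead matrix whose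
characteristic polynomial is the left-hand side; `a ^ 2`, `b ^ 2` are the unique values making it
`(t - l1) (t - l2) (t - l3)`. -/
lemma arrowhead_charpoly_eq {l1 l2 l3 a b : ℝ} (h13 : l1 ≠ l3)
    (ha : a ^ 2 = (l2 - l1) ^ 2 * (2 * l3 - l1 - l2) / (8 * (l3 - l1)))
    (hb : b ^ 2 = (l3 - l2) ^ 2 * (l3 + l2 - 2 * l1) / (8 * (l3 - l1))) (t : ℝ) :
    (t - (l1 + l2) / 2) * (t - (l2 + l3) / 2) * (t - (l1 + l3) / 2)
        - 2 * a ^ 2 * (t - (l2 + l3) / 2) - 2 * b ^ 2 * (t - (l1 + l2) / 2)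
      = (t - l1) * (t - l2) * (t - l3) := by
  have : l3 - l1 ≠ 0 := sub_ne_zero.mpr h13.symm
  rw [ha, hb]
  field_simp
  ring

lemma multOf_butterflyMatrix {l1 l2 l3 a b : ℝ} (h12 : l1 < l2) (h23 : l2 < l3)
    (ha : a ^ 2 = (l2 - l1) ^ 2 * (2 * l3 - l1 - l2) / (8 * (l3 - l1)))
    (hb : b ^ 2 = (l3 - l2) ^ 2 * (l3 + l2 - 2 * l1) / (8 * (l3 - l1))) (t : ℝ) :
    multOf (butterflyMatrix l1 ((l1 + l2) / 2) l3 ((l2 + l3) / 2) ((l1 + l3) / 2) a b) t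
      = Fintype.card {i // ![l1, l1, l2, l3, l3] i = t} := by
  have h13 := h12.trans h23
  set β₁ := (l1 + l2) / 2
  set β₂ := (l2 + l3) / 2
  set U : Matrix (Fin 5) (Fin 5) ℝ := (of ![![1, -1, 0, 0, 0], arrowEigenvector β₁ β₂ a b l1,
    arrowEigenvector β₁ β₂ a b l2, arrowEigenvector β₁ β₂ a b l3, ![0, 0, 1, -1, 0]])ᵀ
  have hroot : ∀ s, (s - l1) * (s - l2) * (s - l3) = 0 →
      (s - β₁) * (s - β₂) * (s - (l1 + l3) / 2) = 2 * a ^ 2 * (s - β₂) + 2 * b ^ 2 * (s - β₁) :=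
    fun s hs => by linear_combination arrowhead_charpoly_eq h13.ne ha hb s + hs
  have hAU : butterflyMatrix l1 β₁ l3 β₂ ((l1 + l3) / 2) a b * U
      = U * diagonal ![l1, l1, l2, l3, l3] := by
    refine mul_eq_mul_diagonal_of_mulVec fun j => ?_
    fin_cases j
    · exact butterflyMatrix_mulVec_antisymm₁
    · exact butterflyMatrix_mulVec_arrowEigenvector (hroot l1 (by ring))
    · exact butterflyMatrix_mulVec_arrowEigenvector (hroot l2 (by ring))
    · exact butterflyMatrix_mulVec_arrowEigenvector (hroot l3 (by ring))
    · exact butterflyMatrix_mulVec_antisymm₂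
  have hcol : ∀ j, Uᵀ j ≠ 0 := by
    intro j hj
    have h0 := congrFun hj 0
    have h2 := congrFun hj 2
    have h4 := congrFun hj 4
    fin_cases j <;>
      simp only [U, β₁, β₂, arrowEigenvector, transpose_apply, Pi.zero_apply, mul_eq_zero,
        one_ne_zero, of_apply, cons_val', cons_val, cons_val_zero, cons_val_one, cons_val_fin_one,
        Fin.isValue, Fin.zero_eta, Fin.mk_one, Fin.reduceFinMk] at h0 h2 h4 <;>
      rcases h4 with h | h <;> linarith
  have horth : ∀ i j, i ≠ j → ![l1, l1, l2, l3, l3] i = ![l1, l1, l2, l3, l3] j →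
      Uᵀ i ⬝ᵥ Uᵀ j = 0 := by
    intro i j hij hd
    fin_cases i <;> fin_cases j <;>
      simp [U, dotProduct, Fin.sum_univ_five, arrowEigenvector, h12.ne, h23.ne, h13.ne, h12.ne',
        h23.ne', h13.ne'] at hij hd ⊢
  exact multOf_eq_card_of_mul_eq_mul_diagonal
    (isUnit_det_of_mul_eq_mul_diagonal butterflyMatrix_isSymm hAU hcol horth) hAU t

/-- For all `λ₁ < λ₂ < λ₃` there is an SSP matrix in `S(Bfly)` with spectrum
`{λ₁, λ₁, λ₂, λ₃, λ₃}` (ordered multiplicity list `(2,1,2)`). -/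
theorem butterfly_oml212_spectrally_arbitrary_SSP (l1 l2 l3 : ℝ)
    (h12 : l1 < l2) (h23 : l2 < l3) :
    ∃ A : Matrix (Fin 5) (Fin 5) ℝ, InS butterfly A ∧ HasSSP A ∧
      multOf A l1 = 2 ∧ multOf A l2 = 1 ∧ multOf A l3 = 2 ∧
      ∀ t, t ≠ l1 → t ≠ l2 → t ≠ l3 → multOf A t = 0 := by
  have h13 := h12.trans h23
  have hsqrt {x : ℝ} (hx : 0 < x) : ∃ a : ℝ, a ≠ 0 ∧ a ^ 2 = x :=
    ⟨√x, (Real.sqrt_pos.mpr hx).ne', Real.sq_sqrt hx.le⟩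
  obtain ⟨a, ha0, ha⟩ := hsqrt (x := (l2 - l1) ^ 2 * (2 * l3 - l1 - l2) / (8 * (l3 - l1)))
    (div_pos (mul_pos (pow_pos (by linarith) 2) (by linarith)) (by linarith))
  obtain ⟨b, hb0, hb⟩ := hsqrt (x := (l3 - l2) ^ 2 * (l3 + l2 - 2 * l1) / (8 * (l3 - l1)))
    (div_pos (mul_pos (pow_pos (by linarith) 2) (by linarith)) (by linarith))
  have hS : InS butterfly
      (butterflyMatrix l1 ((l1 + l2) / 2) l3 ((l2 + l3) / 2) ((l1 + l3) / 2) a b) :=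
    inS_butterflyMatrix (by intro h; linarith) (by intro h; linarith) ha0 hb0
  refine ⟨_, hS, hasSSP_butterflyMatrix hS ha0 hb0 h13.ne, ?_⟩
  simp only [multOf_butterflyMatrix h12 h23 ha hb, Fintype.card_subtype, Finset.card_filter,
    Fin.sum_univ_five]
  refine ⟨by simp [h12.ne', h13.ne'], by simp [h12.ne, h23.ne'], by simp [h13.ne, h23.ne],
    fun t h1 h2 h3 => by simp [h1.symm, h2.symm, h3.symm]⟩
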